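/- arXiv:2207.09278 — 2 statements merged into one kernel-verified Lean document; each statement's English description precedes it below -/
import Mathlib

section
/- Let 1 < p < ∞, let S₁, S₂ ⊂ ℝ be disjoint compact sets, and let f ∈ PW^p_{S₁} with f ∈ L^p(ℝ). Then ‖f‖_{L^p} ≤ ‖f + g‖_{L^p} for all g ∈ PW^p_{S₂} if and only if ∫_ℝ |f(x)|^{p-2} f(x) conj(g(x)) dx = 0 for all g ∈ PW^p_{S₂}. -/
open MeasureTheory Real Complex FourierTransform Set Pointwise Filter
open scoped ENNReal Topology

/-- The distributional Fourier transform of `f` is supported in the closed set `S`: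
for every Schwartz function `φ` whose support is disjoint from `S`, the pairing
`⟨𝓕 f, φ⟩ = ⟨f, 𝓕 φ⟩` vanishes. -/
def HasSpectrumIn (f : ℝ → ℂ) (S : Set ℝ) : Prop :=
  ∀ φ : SchwartzMap ℝ ℂ, Disjoint (tsupport (φ : ℝ → ℂ)) S →
    ∫ x, f x * 𝓕 (φ : ℝ → ℂ) x = 0

/-- Membership in the Paley-Wiener space `PW^p_S`. -/
def MemPW (p : ℝ≥0∞) (f : ℝ → ℂ) (S : Set ℝ) : Prop :=
  MemLp f p volume ∧ HasSpectrumIn f S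

/-- A finite union of closed intervals. -/
def IsFinUnionIntervals (S : Set ℝ) : Prop :=
  ∃ (n : ℕ) (a b : Fin n → ℝ), S = ⋃ i, Icc (a i) (b i)

/-! The function `t ↦ ∫ ‖f + t • g‖ ^ p` is convex, and by dominated differentiation (with the
integrable majorant `p (‖f‖ + ‖g‖) ^ p`) its derivative at `0` is `p ∫ ‖f‖ ^ (p - 2) ⟪g, f⟫_ℝ`.
Hence `f` has minimal norm in `f + V`, for a family `V` closed under real scaling, iff these
derivatives vanish: necessity because `0` is a minimum, sufficiency by the tangent-line inequality
for the convex function `‖·‖ ^ p`. When `V` is closed under complex scaling, testing with `g` and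
`I • g` recovers the real and imaginary parts of `∫ ‖f‖ ^ (p - 2) f conj g`. -/

open scoped InnerProductSpace

section Pointwise

variable {E : Type*} [NormedAddCommGroup E] [InnerProductSpace ℝ E] {p : ℝ}

lemma convexOn_norm_rpow (hp : 1 ≤ p) : ConvexOn ℝ univ (fun x : E => ‖x‖ ^ p) := by
  refine ⟨convex_univ, fun x _ y _ a b ha hb hab => ?_⟩
  calc ‖a • x + b • y‖ ^ p ≤ (a * ‖x‖ + b * ‖y‖) ^ p := by
        gcongr
        exact (norm_add_le _ _).trans_eq (by rw [norm_smul_of_nonneg ha, norm_smul_of_nonneg hb])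
    _ ≤ a • ‖x‖ ^ p + b • ‖y‖ ^ p :=
        (convexOn_rpow hp).2 (norm_nonneg x) (norm_nonneg y) ha hb hab

lemma hasDerivAt_norm_add_smul_rpow (hp : 1 < p) (a b : E) (t : ℝ) :
    HasDerivAt (fun s : ℝ => ‖a + s • b‖ ^ p)
      (p * (‖a + t • b‖ ^ (p - 2) * ⟪b, a + t • b⟫_ℝ)) t := by
  have hcomp := (hasFDerivAt_norm_rpow (a + t • b) hp).comp_hasDerivAt t
    (((hasDerivAt_id t).smul_const b).const_add a)
  refine hcomp.congr_deriv ?_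
  simp only [smul_apply, innerSL_apply_apply, one_smul, smul_eq_mul,
    real_inner_comm, mul_assoc]

lemma norm_rpow_add_mul_inner_le (hp : 1 < p) (a b : E) :
    ‖a‖ ^ p + p * (‖a‖ ^ (p - 2) * ⟪b, a⟫_ℝ) ≤ ‖a + b‖ ^ p := by
  have hconv : ConvexOn ℝ univ (fun s : ℝ => ‖a + s • b‖ ^ p) := by
    have h := (convexOn_norm_rpow (E := E) hp.le).comp_affineMap
      (AffineMap.const ℝ ℝ a + (LinearMap.id.smulRight b).toAffineMap)
    rw [preimage_univ] at h
    exact h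
  have hslope := hconv.le_slope_of_hasDerivAt (mem_univ 0) (mem_univ 1) one_pos
    (hasDerivAt_norm_add_smul_rpow hp a b 0)
  simp only [zero_smul, add_zero, one_smul, slope_def_field, sub_zero, div_one] at hslope
  linarith

end Pointwise

lemma Real.rpow_sub_two_mul_self_le {x : ℝ} (hx : 0 ≤ x) (p : ℝ) :
    x ^ (p - 2) * x ≤ x ^ (p - 1) := by
  rcases hx.eq_or_lt with rfl | hx
  · simp only [mul_zero]
    positivity
  · rw [← Real.rpow_add_one hx.ne', show p - 2 + 1 = p - 1 by ring]

lemma Real.rpow_sub_one_mul_le_rpow {p x y z : ℝ} (hp : 1 ≤ p) (hx : 0 ≤ x) (hxz : x ≤ z)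
    (hy : 0 ≤ y) (hyz : y ≤ z) : x ^ (p - 1) * y ≤ z ^ p := by
  calc x ^ (p - 1) * y ≤ z ^ (p - 1) * z :=
        mul_le_mul (Real.rpow_le_rpow hx hxz (by linarith)) hyz hy
          (Real.rpow_nonneg (hx.trans hxz) _)
    _ = z ^ p := by rw [← Real.rpow_add_one' (hx.trans hxz) (by linarith), sub_add_cancel]

lemma norm_rpow_sub_two_smul_inner_le {𝕜 F : Type*} [RCLike 𝕜] [NormedAddCommGroup F]
    [InnerProductSpace 𝕜 F] (p : ℝ) (a b : F) :
    ‖‖a‖ ^ (p - 2) • ⟪b, a⟫_𝕜‖ ≤ ‖a‖ ^ (p - 1) * ‖b‖ :=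
  calc ‖‖a‖ ^ (p - 2) • ⟪b, a⟫_𝕜‖ = ‖a‖ ^ (p - 2) * ‖⟪b, a⟫_𝕜‖ := by
        rw [norm_smul, Real.norm_of_nonneg (by positivity)]
    _ ≤ ‖a‖ ^ (p - 2) * ‖a‖ * ‖b‖ := by
        rw [mul_assoc, mul_comm ‖a‖]
        gcongr
        exact norm_inner_le_norm b a
    _ ≤ ‖a‖ ^ (p - 1) * ‖b‖ := by
        gcongr
        exact Real.rpow_sub_two_mul_self_le (norm_nonneg a) p

section Integral

variable {α : Type*} [MeasurableSpace α] {μ : Measure α} {p : ℝ}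

lemma MeasureTheory.MemLp.integrable_norm_rpow_ofReal {E : Type*} [NormedAddCommGroup E] {f : α → E}
    (hp : 0 < p) (hf : MemLp f (ENNReal.ofReal p) μ) : Integrable (fun x => ‖f x‖ ^ p) μ := by
  simpa [ENNReal.toReal_ofReal hp.le] using
    hf.integrable_norm_rpow (by simpa using hp) ENNReal.ofReal_ne_top

lemma eLpNorm_le_eLpNorm_iff_integral_norm_rpow_le {E : Type*} [NormedAddCommGroup E]
    {f g : α → E} (hp : 0 < p) (hf : MemLp f (ENNReal.ofReal p) μ)
    (hg : MemLp g (ENNReal.ofReal p) μ) :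
    eLpNorm f (ENNReal.ofReal p) μ ≤ eLpNorm g (ENNReal.ofReal p) μ ↔
      ∫ x, ‖f x‖ ^ p ∂μ ≤ ∫ x, ‖g x‖ ^ p ∂μ := by
  have hp0 : ENNReal.ofReal p ≠ 0 := by simpa using hp
  rw [hf.eLpNorm_eq_integral_rpow_norm hp0 ENNReal.ofReal_ne_top,
    hg.eLpNorm_eq_integral_rpow_norm hp0 ENNReal.ofReal_ne_top,
    ENNReal.ofReal_le_ofReal_iff (by positivity), ENNReal.toReal_ofReal hp.le,
    Real.rpow_le_rpow_iff (integral_nonneg fun _ => by positivity)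
      (integral_nonneg fun _ => by positivity) (inv_pos.2 hp)]

lemma integrable_norm_add_norm_rpow {E F : Type*} [NormedAddCommGroup E] [NormedAddCommGroup F]
    {f : α → E} {g : α → F} (hp : 0 < p) (hf : MemLp f (ENNReal.ofReal p) μ)
    (hg : MemLp g (ENNReal.ofReal p) μ) : Integrable (fun x => (‖f x‖ + ‖g x‖) ^ p) μ := by
  simpa [abs_of_nonneg (add_nonneg (norm_nonneg _) (norm_nonneg _))] using
    (hf.norm.add hg.norm).integrable_norm_rpow_ofReal hp

lemma integrable_rpow_sub_two_smul_inner {𝕜 F : Type*} [RCLike 𝕜] [NormedAddCommGroup F]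
    [InnerProductSpace 𝕜 F] {f g : α → F} (hp : 1 < p) (hf : MemLp f (ENNReal.ofReal p) μ)
    (hg : MemLp g (ENNReal.ofReal p) μ) :
    Integrable (fun x => ‖f x‖ ^ (p - 2) • ⟪g x, f x⟫_𝕜) μ := by
  refine (integrable_norm_add_norm_rpow (by linarith) hf hg).mono'
    ((hf.1.norm.aemeasurable.pow_const _).aestronglyMeasurable.smul (hg.1.inner hf.1))
    (ae_of_all _ fun x => ?_)
  exact (norm_rpow_sub_two_smul_inner_le p (f x) (g x)).trans
    (Real.rpow_sub_one_mul_le_rpow hp.le (norm_nonneg _) (le_add_of_nonneg_right (norm_nonneg _))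
      (norm_nonneg _) (le_add_of_nonneg_left (norm_nonneg _)))

end Integral

section Criterion

variable {α : Type*} [MeasurableSpace α] {μ : Measure α} {p : ℝ}
  {E : Type*} [NormedAddCommGroup E] [InnerProductSpace ℝ E]

theorem hasDerivAt_integral_norm_add_smul_rpow (hp : 1 < p) {f g : α → E}
    (hf : MemLp f (ENNReal.ofReal p) μ) (hg : MemLp g (ENNReal.ofReal p) μ) :
    HasDerivAt (fun t : ℝ => ∫ x, ‖f x + t • g x‖ ^ p ∂μ)
      (p * ∫ x, ‖f x‖ ^ (p - 2) * ⟪g x, f x⟫_ℝ ∂μ) 0 := by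
  have hbound : ∀ x, ∀ t ∈ Metric.ball (0 : ℝ) 1,
      ‖p * (‖f x + t • g x‖ ^ (p - 2) * ⟪g x, f x + t • g x⟫_ℝ)‖ ≤
        p * (‖f x‖ + ‖g x‖) ^ p := by
    intro x t ht
    have hnorm : ‖f x + t • g x‖ ≤ ‖f x‖ + ‖g x‖ := by
      rw [mem_ball_zero_iff, Real.norm_eq_abs] at ht
      refine (norm_add_le _ _).trans ?_
      rw [norm_smul, Real.norm_eq_abs]
      gcongr
      exact mul_le_of_le_one_left (norm_nonneg _) ht.le
    rw [norm_mul, Real.norm_of_nonneg (by linarith)]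
    gcongr
    exact (norm_rpow_sub_two_smul_inner_le p _ (g x)).trans
      (Real.rpow_sub_one_mul_le_rpow hp.le (norm_nonneg _) hnorm (norm_nonneg _)
        (le_add_of_nonneg_left (norm_nonneg _)))
  have hmeas (t : ℝ) : AEStronglyMeasurable (fun x => ‖f x + t • g x‖ ^ p) μ :=
    ((hf.1.add (hg.1.const_smul t)).norm.aemeasurable.pow_const p).aestronglyMeasurable
  have hint : Integrable (fun x => ‖f x‖ ^ (p - 2) * ⟪g x, f x⟫_ℝ) μ :=
    integrable_rpow_sub_two_smul_inner hp hf hg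
  have hderiv := hasDerivAt_integral_of_dominated_loc_of_deriv_le
    (F := fun t x => ‖f x + t • g x‖ ^ p)
    (F' := fun t x => p * (‖f x + t • g x‖ ^ (p - 2) * ⟪g x, f x + t • g x⟫_ℝ))
    (Metric.ball_mem_nhds (0 : ℝ) one_pos)
    (Eventually.of_forall hmeas)
    (by simpa only [zero_smul, add_zero] using hf.integrable_norm_rpow_ofReal (by linarith))
    (by simpa only [zero_smul, add_zero] using (hint.const_mul p).1)
    (ae_of_all _ hbound)
    ((integrable_norm_add_norm_rpow (by linarith) hf hg).const_mul p)
    (ae_of_all _ fun x t _ => hasDerivAt_norm_add_smul_rpow hp (f x) (g x) t)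
  simpa only [zero_smul, add_zero, integral_const_mul] using hderiv.2

lemma integral_norm_rpow_add_mul_inner_le (hp : 1 < p) {f g : α → E}
    (hf : MemLp f (ENNReal.ofReal p) μ) (hg : MemLp g (ENNReal.ofReal p) μ) :
    ∫ x, ‖f x‖ ^ p ∂μ + p * ∫ x, ‖f x‖ ^ (p - 2) * ⟪g x, f x⟫_ℝ ∂μ ≤
      ∫ x, ‖f x + g x‖ ^ p ∂μ := by
  have hint : Integrable (fun x => ‖f x‖ ^ (p - 2) * ⟪g x, f x⟫_ℝ) μ :=
    integrable_rpow_sub_two_smul_inner hp hf hg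
  rw [← integral_const_mul, ← integral_add (hf.integrable_norm_rpow_ofReal (by linarith))
    (hint.const_mul p)]
  exact integral_mono ((hf.integrable_norm_rpow_ofReal (by linarith)).add (hint.const_mul p))
    ((hf.add hg).integrable_norm_rpow_ofReal (by linarith))
    fun x => norm_rpow_add_mul_inner_le hp (f x) (g x)

theorem forall_integral_norm_rpow_le_add_iff (hp : 1 < p) {f : α → E}
    (hf : MemLp f (ENNReal.ofReal p) μ) {P : (α → E) → Prop}
    (hPLp : ∀ g, P g → MemLp g (ENNReal.ofReal p) μ) (hPsmul : ∀ g, P g → ∀ t : ℝ, P (t • g)) :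
    (∀ g, P g → ∫ x, ‖f x‖ ^ p ∂μ ≤ ∫ x, ‖f x + g x‖ ^ p ∂μ) ↔
      ∀ g, P g → ∫ x, ‖f x‖ ^ (p - 2) * ⟪g x, f x⟫_ℝ ∂μ = 0 := by
  constructor
  · intro hmin g hg
    have hlocal : IsLocalMin (fun t : ℝ => ∫ x, ‖f x + t • g x‖ ^ p ∂μ) 0 :=
      Eventually.of_forall fun t => by simpa using hmin _ (hPsmul g hg t)
    have hzero := hlocal.hasDerivAt_eq_zero
      (hasDerivAt_integral_norm_add_smul_rpow hp hf (hPLp g hg))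
    exact (mul_eq_zero.1 hzero).resolve_left (by positivity)
  · intro horth g hg
    simpa [horth g hg] using integral_norm_rpow_add_mul_inner_le hp hf (hPLp g hg)

end Criterion

theorem forall_integral_real_inner_eq_zero_iff {α : Type*} [MeasurableSpace α] {μ : Measure α}
    {p : ℝ} (hp : 1 < p) {f : α → ℂ} (hf : MemLp f (ENNReal.ofReal p) μ) {P : (α → ℂ) → Prop}
    (hPLp : ∀ g, P g → MemLp g (ENNReal.ofReal p) μ) (hPsmul : ∀ g, P g → ∀ c : ℂ, P (c • g)) :
    (∀ g, P g → ∫ x, ‖f x‖ ^ (p - 2) * ⟪g x, f x⟫_ℝ ∂μ = 0) ↔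
      ∀ g, P g → ∫ x, ((‖f x‖ ^ (p - 2) : ℝ) : ℂ) * f x * starRingEnd ℂ (g x) ∂μ = 0 := by
  have hre : ∀ g, P g → (∫ x, ((‖f x‖ ^ (p - 2) : ℝ) : ℂ) * f x * starRingEnd ℂ (g x) ∂μ).re =
      ∫ x, ‖f x‖ ^ (p - 2) * ⟪g x, f x⟫_ℝ ∂μ := by
    intro g hg
    have hint := integrable_rpow_sub_two_smul_inner (𝕜 := ℂ) hp hf (hPLp g hg)
    simp only [RCLike.inner_apply, Complex.real_smul] at hint
    rw [← RCLike.re_to_complex, ← integral_re (by simpa only [mul_assoc] using hint)]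
    congr with x
    rw [mul_assoc, RCLike.re_to_complex, Complex.re_ofReal_mul, Complex.inner]
  have hrot : ∀ g : α → ℂ,
      ∫ x, ((‖f x‖ ^ (p - 2) : ℝ) : ℂ) * f x * starRingEnd ℂ ((I • g) x) ∂μ =
        -I * ∫ x, ((‖f x‖ ^ (p - 2) : ℝ) : ℂ) * f x * starRingEnd ℂ (g x) ∂μ := by
    intro g
    rw [← integral_const_mul]
    congr with x
    simp only [Pi.smul_apply, smul_eq_mul, map_mul, conj_I]
    ring
  constructor
  · intro horth g hg
    apply Complex.ext
    · rw [hre g hg, horth g hg, zero_re]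
    · have him := horth _ (hPsmul g hg I)
      rw [← hre _ (hPsmul g hg I), hrot] at him
      simpa using him
  · intro horth g hg
    rw [← hre g hg, horth g hg, zero_re]

lemma HasSpectrumIn.const_smul {g : ℝ → ℂ} {S : Set ℝ} (h : HasSpectrumIn g S) (c : ℂ) :
    HasSpectrumIn (c • g) S := by
  intro φ hφ
  simp only [Pi.smul_apply, smul_eq_mul, mul_assoc]
  rw [integral_const_mul, h φ hφ, mul_zero]

theorem stmt_2_general (p : ℝ) (hp : 1 < p) (S₂ : Set ℝ) (f : ℝ → ℂ)
    (hf : MemLp f (ENNReal.ofReal p) volume) :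
    (∀ g : ℝ → ℂ, MemLp g (ENNReal.ofReal p) volume → HasSpectrumIn g S₂ →
        eLpNorm f (ENNReal.ofReal p) volume ≤ eLpNorm (f + g) (ENNReal.ofReal p) volume) ↔
    (∀ g : ℝ → ℂ, MemLp g (ENNReal.ofReal p) volume → HasSpectrumIn g S₂ →
        ∫ x, ((‖f x‖ ^ (p - 2) : ℝ) : ℂ) * f x * (starRingEnd ℂ) (g x) = 0) := by
  set P : (ℝ → ℂ) → Prop := fun g => MemLp g (ENNReal.ofReal p) volume ∧ HasSpectrumIn g S₂
  have hPLp : ∀ g, P g → MemLp g (ENNReal.ofReal p) volume := fun g hg => hg.1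
  have hPsmul : ∀ g, P g → ∀ c : ℂ, P (c • g) := fun g hg c =>
    ⟨hg.1.const_smul c, hg.2.const_smul c⟩
  have hPreal : ∀ g, P g → ∀ t : ℝ, P (t • g) := fun g hg t => by
    simpa only [Complex.coe_smul] using hPsmul g hg t
  have key := (forall_integral_norm_rpow_le_add_iff hp hf hPLp hPreal).trans
    (forall_integral_real_inner_eq_zero_iff hp hf hPLp hPsmul)
  simp only [P, and_imp] at key
  rw [← key]
  exact forall₃_congr fun g hg _ =>
    eLpNorm_le_eLpNorm_iff_integral_norm_rpow_le (by linarith) hf (hf.add hg)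

/-- Shapiro's criterion. For `1 < p < ∞` and disjoint compact sets
`S₁, S₂ ⊆ ℝ` and `f ∈ PW^p_{S₁}`: `‖f‖_p ≤ ‖f + g‖_p` for every `g ∈ PW^p_{S₂}` iff
`∫ |f|^{p-2} f conj g = 0` for every `g ∈ PW^p_{S₂}`. -/
theorem stmt_2 (p : ℝ) (hp : 1 < p) (S₁ S₂ : Set ℝ) (h1 : IsCompact S₁) (h2 : IsCompact S₂)
    (hdisj : Disjoint S₁ S₂) (f : ℝ → ℂ) (hf : MemLp f (ENNReal.ofReal p) volume)
    (hfs : HasSpectrumIn f S₁) :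
    (∀ g : ℝ → ℂ, MemLp g (ENNReal.ofReal p) volume → HasSpectrumIn g S₂ →
        eLpNorm f (ENNReal.ofReal p) volume ≤ eLpNorm (f + g) (ENNReal.ofReal p) volume) ↔
    (∀ g : ℝ → ℂ, MemLp g (ENNReal.ofReal p) volume → HasSpectrumIn g S₂ →
        ∫ x, ((‖f x‖ ^ (p - 2) : ℝ) : ℂ) * f x * (starRingEnd ℂ) (g x) = 0) :=
  stmt_2_general p hp S₂ f hf
end

section
/- Let 1 < p < ∞ with p ∉ 2ℕ, and let h(x) = (x² − 1)(cos(2πx) − cosh(2π)) / ∏_{k=1}^N ((x+k)² + 1) with N > 1/(2(p-1)) + 2. Then the function g(x) = |h(x)|^{p-2} h(x) is in L^1(ℝ) but is not real-analytic on ℝ; in particular g fails to be analytic at x = 1, where h changes sign. -/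
/-! Near `x = 1` one has `h x = (1 - x) * w x` with `w` continuous and positive, so
`g x = |x - 1| ^ (p - 2) * (x - 1) * W x` with `W = -w ^ (p - 1)` continuous and nonzero at `1`.
If `g` were analytic at `1`, write `g x = (x - 1) ^ n * u x` with `u 1 ≠ 0`. To the right of `1`,
`(x - 1) ^ (p - 1 - n) = u x / W x` has a nonzero limit, which forces `n = p - 1`; comparing the
two sides of `1` then gives `(-1) ^ n = -1`, so `n` is odd and `p` is an even integer.

For integrability, Peetre's inequality `1 + x² ≤ 2 (1 + k²) (1 + (x + k)²)` bounds the
denominator of `h` below by a multiple of `(1 + x²) ^ N`, hence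
`|g| = |h| ^ (p - 1) ≲ (1 + x²) ^ (-(N - 1) (p - 1))`, which is integrable since
`2 (N - 1) (p - 1) > 1`. -/

open MeasureTheory Real Complex FourierTransform Set Pointwise Filter
open scoped ENNReal Topology

theorem eq_zero_of_tendsto_sub_rpow {a b L : ℝ} (hL : L ≠ 0)
    (h : Tendsto (fun x => (x - a) ^ b) (𝓝[>] a) (𝓝 L)) : b = 0 := by
  by_contra hb
  have hpos : ∀ᶠ x in 𝓝[>] a, 0 < x - a :=
    eventually_nhdsWithin_of_forall fun x hx => sub_pos.mpr hx
  have hL0 : 0 < L :=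
    (ge_of_tendsto h (hpos.mono fun x hx => (rpow_pos_of_pos hx b).le)).lt_of_ne' hL
  -- `x - a = ((x - a) ^ b) ^ b⁻¹` would tend both to `0` and to `L ^ b⁻¹ > 0`
  have hzero : Tendsto (fun x => x - a) (𝓝[>] a) (𝓝 0) :=
    tendsto_sub_nhds_zero_iff.mpr nhdsWithin_le_nhds
  have hlim : Tendsto (fun x => x - a) (𝓝[>] a) (𝓝 (L ^ b⁻¹)) :=
    (h.rpow_const (Or.inl hL)).congr' (hpos.mono fun x hx => rpow_rpow_inv hx.le hb)
  exact (rpow_pos_of_pos hL0 _).ne' (tendsto_nhds_unique hlim hzero)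

theorem abs_rpow_mul_self_of_pos {t : ℝ} (ht : 0 < t) (s : ℝ) : |t| ^ s * t = t ^ (s + 1) := by
  rw [abs_of_pos ht, rpow_add_one ht.ne']

theorem abs_rpow_mul_self_of_neg {t : ℝ} (ht : t < 0) (s : ℝ) :
    |t| ^ s * t = -(-t) ^ (s + 1) := by
  rw [← abs_rpow_mul_self_of_pos (neg_pos.mpr ht), abs_neg]; ring

theorem abs_abs_rpow_mul_self {s : ℝ} (hs : s + 1 ≠ 0) (t : ℝ) :
    |(|t| ^ s * t)| = |t| ^ (s + 1) := by
  rw [abs_mul, abs_of_nonneg (rpow_nonneg (abs_nonneg t) s), rpow_add' (abs_nonneg t) hs, rpow_one]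

theorem abs_rpow_mul_self_mul_of_pos {w : ℝ} (hw : 0 < w) (c s : ℝ) :
    |c * w| ^ s * (c * w) = |c| ^ s * c * w ^ (s + 1) := by
  rw [abs_mul, abs_of_pos hw, mul_rpow (abs_nonneg c) hw.le, rpow_add_one hw.ne']; ring

theorem AnalyticAt.exists_eq_two_mul_of_eventually_eq_abs_rpow_mul {f W : ℝ → ℝ} {a s : ℝ}
    (hf : AnalyticAt ℝ f a) (hW : ContinuousAt W a) (hWa : W a ≠ 0)
    (hfW : ∀ᶠ x in 𝓝 a, f x = |x - a| ^ s * (x - a) * W x) : ∃ k : ℕ, s = 2 * k := by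
  have hnear : ∀ᶠ x in 𝓝 a, f x = |x - a| ^ s * (x - a) * W x ∧ W x ≠ 0 :=
    hfW.and (hW.eventually_ne hWa)
  have hright : ∀ᶠ x in 𝓝[>] a, f x = (x - a) ^ (s + 1) * W x ∧ W x ≠ 0 ∧ 0 < x - a := by
    filter_upwards [hnear.filter_mono nhdsWithin_le_nhds, self_mem_nhdsWithin]
      with x ⟨hfx, hWx⟩ hx
    have hx : 0 < x - a := sub_pos.mpr hx
    exact ⟨by rw [hfx, abs_rpow_mul_self_of_pos hx], hWx, hx⟩
  have hleft : ∀ᶠ x in 𝓝[<] a, f x = -(a - x) ^ (s + 1) * W x ∧ W x ≠ 0 ∧ 0 < a - x := by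
    filter_upwards [hnear.filter_mono nhdsWithin_le_nhds, self_mem_nhdsWithin]
      with x ⟨hfx, hWx⟩ hx
    have hx : x - a < 0 := sub_neg.mpr hx
    exact ⟨by rw [hfx, abs_rpow_mul_self_of_neg hx, neg_sub], hWx, by linarith⟩
  have hord : analyticOrderAt f a ≠ ⊤ := by
    intro htop
    obtain ⟨x, hx0, hfx, hWx, hx⟩ :=
      (((analyticOrderAt_eq_top.mp htop).filter_mono nhdsWithin_le_nhds).and hright).exists
    rw [hfx] at hx0
    exact mul_ne_zero (rpow_pos_of_pos hx _).ne' hWx hx0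
  obtain ⟨n, hn⟩ := WithTop.ne_top_iff_exists.mp hord
  obtain ⟨u, hu, hua, hfu⟩ := hf.analyticOrderAt_eq_natCast.mp hn.symm
  have hratio : Tendsto (fun x => u x / W x) (𝓝 a) (𝓝 (u a / W a)) :=
    hu.continuousAt.tendsto.div hW hWa
  have hexp : s + 1 - n = 0 := by
    refine eq_zero_of_tendsto_sub_rpow (div_ne_zero hua hWa)
      ((hratio.mono_left (nhdsWithin_le_nhds (s := Ioi a))).congr' ?_)
    filter_upwards [hfu.filter_mono nhdsWithin_le_nhds, hright] with x hfx ⟨hfx', hWx, hx⟩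
    rw [smul_eq_mul, hfx'] at hfx
    rw [rpow_sub hx, rpow_natCast, div_eq_div_iff hWx (pow_ne_zero _ hx.ne'), hfx]
    ring
  have hs : s + 1 = n := by linarith
  have hone : u a / W a = 1 := by
    refine tendsto_nhds_unique
      ((hratio.mono_left (nhdsWithin_le_nhds (s := Ioi a))).congr' ?_) tendsto_const_nhds
    filter_upwards [hfu.filter_mono nhdsWithin_le_nhds, hright] with x hfx ⟨hfx', hWx, hx⟩
    rw [smul_eq_mul, hfx', hs, rpow_natCast] at hfx
    rw [div_eq_one_iff_eq hWx]
    exact (mul_left_cancel₀ (pow_ne_zero _ hx.ne') hfx).symm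
  have hsign : (-1 : ℝ) ^ n * (u a / W a) = -1 := by
    refine tendsto_nhds_unique (((tendsto_const_nhds.mul hratio).mono_left
      (nhdsWithin_le_nhds (s := Iio a))).congr' ?_) tendsto_const_nhds
    filter_upwards [hfu.filter_mono nhdsWithin_le_nhds, hleft] with x hfx ⟨hfx', hWx, hx⟩
    rw [smul_eq_mul, hfx', hs, rpow_natCast, show x - a = -(a - x) by ring, neg_pow] at hfx
    rw [mul_div_assoc', div_eq_iff hWx]
    refine mul_left_cancel₀ (pow_ne_zero n hx.ne') ?_
    linear_combination -hfx
  rw [hone, mul_one, neg_one_pow_eq_neg_one_iff_odd (by norm_num)] at hsign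
  obtain ⟨k, rfl⟩ := hsign
  exact ⟨k, by push_cast at hs; linarith⟩

theorem one_add_sq_le_two_mul_one_add_sq_mul (x y : ℝ) :
    1 + x ^ 2 ≤ 2 * (1 + y ^ 2) * ((x + y) ^ 2 + 1) := by
  nlinarith [sq_nonneg (x + 2 * y), sq_nonneg (y * (x + y)), sq_nonneg y]

theorem one_add_sq_pow_card_le_prod {ι : Type*} (s : Finset ι) (c : ι → ℝ) (x : ℝ) :
    (1 + x ^ 2) ^ s.card ≤
      (∏ k ∈ s, 2 * (1 + c k ^ 2)) * ∏ k ∈ s, ((x + c k) ^ 2 + 1) := by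
  rw [← Finset.prod_const, ← Finset.prod_mul_distrib]
  exact Finset.prod_le_prod (fun _ _ => by positivity)
    fun k _ => one_add_sq_le_two_mul_one_add_sq_mul x (c k)

theorem integrable_abs_rpow_mul_self {h : ℝ → ℝ} {C σ s : ℝ} (hh : Measurable h)
    (hs : -1 < s) (hσ : 1 < 2 * (σ * (s + 1))) (hle : ∀ x, |h x| ≤ C * (1 + x ^ 2) ^ (-σ)) :
    Integrable (fun x => |h x| ^ s * h x) := by
  have hC : 0 ≤ C := by simpa using (abs_nonneg _).trans (hle 0)
  have hmaj : Integrable (fun x : ℝ => (1 + x ^ 2) ^ (-(2 * (σ * (s + 1))) / 2)) := by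
    simpa using integrable_rpow_neg_one_add_norm_sq (E := ℝ) (μ := volume) (by simpa using hσ)
  refine (hmaj.const_mul (C ^ (s + 1))).mono' (by fun_prop) (Eventually.of_forall fun x => ?_)
  calc ‖|h x| ^ s * h x‖ = |h x| ^ (s + 1) := abs_abs_rpow_mul_self (by linarith) _
    _ ≤ (C * (1 + x ^ 2) ^ (-σ)) ^ (s + 1) := rpow_le_rpow (abs_nonneg _) (hle x) (by linarith)
    _ = C ^ (s + 1) * (1 + x ^ 2) ^ (-(2 * (σ * (s + 1))) / 2) := by
      rw [mul_rpow hC (by positivity), ← rpow_mul (by positivity)]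
      ring_nf

noncomputable def exampleFun (N : ℕ) (x : ℝ) : ℝ :=
  (x ^ 2 - 1) * (Real.cos (2 * π * x) - Real.cosh (2 * π)) /
    ∏ k ∈ Finset.Icc 1 N, ((x + (k : ℝ)) ^ 2 + 1)

theorem prod_shift_sq_add_one_pos (N : ℕ) (x : ℝ) :
    0 < ∏ k ∈ Finset.Icc 1 N, ((x + (k : ℝ)) ^ 2 + 1) :=
  Finset.prod_pos fun _ _ => by positivity

theorem continuous_exampleFun (N : ℕ) : Continuous (exampleFun N) :=
  .div (by fun_prop) (by fun_prop) fun x => (prod_shift_sq_add_one_pos N x).ne'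

theorem exists_abs_exampleFun_le (N : ℕ) :
    ∃ C, ∀ x, |exampleFun N x| ≤ C * (1 + x ^ 2) ^ (-((N : ℝ) - 1)) := by
  refine ⟨(Real.cosh (2 * π) + 1) * ∏ k ∈ Finset.Icc 1 N, 2 * (1 + (k : ℝ) ^ 2), fun x => ?_⟩
  have hx : 0 < 1 + x ^ 2 := by positivity
  have hD := prod_shift_sq_add_one_pos N x
  have hpoly : |x ^ 2 - 1| ≤ 1 + x ^ 2 := abs_le.mpr ⟨by nlinarith, by nlinarith⟩
  have htrig : |Real.cos (2 * π * x) - Real.cosh (2 * π)| ≤ Real.cosh (2 * π) + 1 := by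
    have := Real.neg_one_le_cos (2 * π * x)
    have := Real.cos_le_one (2 * π * x)
    have := Real.cosh_pos (2 * π)
    exact abs_le.mpr ⟨by linarith, by linarith⟩
  have hden := one_add_sq_pow_card_le_prod (Finset.Icc 1 N) (fun k : ℕ => (k : ℝ)) x
  rw [Nat.card_Icc, Nat.add_sub_cancel] at hden
  rw [exampleFun, abs_div, abs_of_pos hD, abs_mul, div_le_iff₀ hD, neg_sub, rpow_sub hx, rpow_one,
    rpow_natCast]
  calc |x ^ 2 - 1| * |Real.cos (2 * π * x) - Real.cosh (2 * π)|
      ≤ (1 + x ^ 2) * (Real.cosh (2 * π) + 1) := mul_le_mul hpoly htrig (abs_nonneg _) hx.le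
    _ ≤ (1 + x ^ 2) * (Real.cosh (2 * π) + 1) *
        ((∏ k ∈ Finset.Icc 1 N, 2 * (1 + (k : ℝ) ^ 2)) *
          (∏ k ∈ Finset.Icc 1 N, ((x + (k : ℝ)) ^ 2 + 1)) / (1 + x ^ 2) ^ N) :=
      le_mul_of_one_le_right (by positivity) ((one_le_div (by positivity)).mpr hden)
    _ = _ := by ring

theorem exists_exampleFun_eq_one_sub_mul (N : ℕ) :
    ∃ w : ℝ → ℝ, Continuous w ∧ (∀ x, -1 < x → 0 < w x) ∧
      ∀ x, exampleFun N x = (1 - x) * w x := by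
  refine ⟨fun x => (x + 1) * (Real.cosh (2 * π) - Real.cos (2 * π * x)) /
    ∏ k ∈ Finset.Icc 1 N, ((x + (k : ℝ)) ^ 2 + 1), ?_, fun x hx => ?_, fun x => ?_⟩
  · exact .div (by fun_prop) (by fun_prop) fun x => (prod_shift_sq_add_one_pos N x).ne'
  · have := Real.cos_le_one (2 * π * x)
    have := Real.one_lt_cosh.mpr (by positivity : 2 * π ≠ 0)
    exact div_pos (mul_pos (by linarith) (by linarith)) (prod_shift_sq_add_one_pos N x)
  · rw [exampleFun, mul_div_assoc']
    ring

/-- With `h` as in Statement 6 (`1 < p < ∞`, `p ∉ 2ℕ`,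
`N > 1/(2(p-1)) + 2`), the function `g = |h|^{p-2} h` is in `L¹(ℝ)` but is not
real-analytic on `ℝ`; in particular it fails to be analytic at `x = 1`. -/
theorem stmt_7 (p : ℝ) (hp : 1 < p) (hpe : ¬∃ m : ℕ, p = 2 * m)
    (N : ℕ) (hN : 1 / (2 * (p - 1)) + 2 < (N : ℝ))
    (h : ℝ → ℝ)
    (hh : ∀ x, h x = (x ^ 2 - 1) * (Real.cos (2 * π * x) - Real.cosh (2 * π)) /
      ∏ k ∈ Finset.Icc 1 N, ((x + (k : ℝ)) ^ 2 + 1))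
    (g : ℝ → ℝ) (hg : ∀ x, g x = |h x| ^ (p - 2) * h x) :
    Integrable g volume ∧ ¬(∀ x : ℝ, AnalyticAt ℝ g x) ∧ ¬AnalyticAt ℝ g 1 := by
  obtain rfl : h = exampleFun N := funext hh
  obtain rfl : g = fun x => |exampleFun N x| ^ (p - 2) * exampleFun N x := funext hg
  have hint : Integrable (fun x => |exampleFun N x| ^ (p - 2) * exampleFun N x) := by
    obtain ⟨C, hC⟩ := exists_abs_exampleFun_le N
    refine integrable_abs_rpow_mul_self (continuous_exampleFun N).measurable (by linarith) ?_ hC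
    have := (div_lt_iff₀ (by linarith : 0 < 2 * (p - 1))).mp (lt_sub_iff_add_lt.mpr hN)
    nlinarith
  have hnot : ¬AnalyticAt ℝ (fun x => |exampleFun N x| ^ (p - 2) * exampleFun N x) 1 := by
    intro hana
    obtain ⟨w, hw, hwpos, hfac⟩ := exists_exampleFun_eq_one_sub_mul N
    have hw1 : 0 < w 1 := hwpos 1 (by norm_num)
    have hg_near : ∀ᶠ x in 𝓝 1, |exampleFun N x| ^ (p - 2) * exampleFun N x =
        |x - 1| ^ (p - 2) * (x - 1) * -w x ^ (p - 1) := by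
      filter_upwards [Ioi_mem_nhds (show (-1 : ℝ) < 1 by norm_num)] with x hx
      rw [hfac, abs_rpow_mul_self_mul_of_pos (hwpos x hx), abs_sub_comm,
        show p - 2 + 1 = p - 1 by ring]
      ring
    obtain ⟨k, hk⟩ := hana.exists_eq_two_mul_of_eventually_eq_abs_rpow_mul
      (hw.continuousAt.rpow_const (.inl hw1.ne')).neg (neg_ne_zero.mpr (rpow_pos_of_pos hw1 _).ne')
      hg_near
    exact hpe ⟨k + 1, by push_cast; linarith⟩
  exact ⟨hint, fun H => hnot (H 1), hnot⟩
end
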